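/- arXiv:2001.07289 — 4 statements merged into one kernel-verified Lean document; each statement's English description precedes it below -/
import Mathlib

section
/- In the abstract multispace BDDC setting, the preconditioned operator BA is well-defined and symmetric with respect to the a-inner product on U: for all u, w ∈ U, a(BAu, w) = a(u, BAw), where A : U → U' is the operator induced by a restricted to U, and B is the multispace BDDC preconditioner. -/
/-- In the abstract multispace BDDC setting, the preconditioned operator `BA`
is symmetric with respect to the `a`-inner product on `U`:
`a(BAu, w) = a(u, BAw)` for all `u, w ∈ U`. -/
theorem stmt4 {W : Type*} [AddCommGroup W] [Module ℝ W] [FiniteDimensional ℝ W]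
    (a : W →ₗ[ℝ] W →ₗ[ℝ] ℝ) (hsymm : ∀ x y, a x y = a y x)
    {N : ℕ} (V : Fin N → Submodule ℝ W)
    (horth : ∀ k l, k ≠ l → ∀ v ∈ V k, ∀ w ∈ V l, a v w = 0)
    (hpos : ∀ k, ∀ v ∈ V k, v ≠ 0 → 0 < a v v)
    (U : Submodule ℝ W) (hU : U ≤ ∑ k, V k)
    (hposU : ∀ u ∈ U, u ≠ 0 → 0 < a u u)
    (Q : Fin N → W →ₗ[ℝ] W)
    (hQU : ∀ k, ∀ v ∈ V k, Q k v ∈ U)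
    (hQdec : ∀ u ∈ U, ∀ v : Fin N → W, (∀ k, v k ∈ V k) → u = ∑ k, v k →
      u = ∑ k, Q k (v k))
    (BA : W →ₗ[ℝ] W)
    (hBA : ∀ u ∈ U, ∃ v : Fin N → W, (∀ k, v k ∈ V k) ∧
      (∀ k, ∀ z ∈ V k, a (v k) z = a u (Q k z)) ∧ BA u = ∑ k, Q k (v k)) :
    ∀ u ∈ U, ∀ w ∈ U, a (BA u) w = a u (BA w) := by
  intro u hu w hw
  obtain ⟨v, hv, hvz, hBAu⟩ := hBA u hu
  obtain ⟨v', hv', hvz', hBAw⟩ := hBA w hw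
  rw [hBAu, hBAw]
  have h1 : a (∑ k, Q k (v k)) w = ∑ k, a (Q k (v k)) w := by
    simp [map_sum, LinearMap.sum_apply]
  have h2 : a u (∑ k, Q k (v' k)) = ∑ k, a u (Q k (v' k)) := by
    simp [map_sum]
  rw [h1, h2]
  refine Finset.sum_congr rfl fun k _ => ?_
  calc a (Q k (v k)) w = a w (Q k (v k)) := hsymm _ _
    _ = a (v' k) (v k) := (hvz' k _ (hv k)).symm
    _ = a (v k) (v' k) := hsymm _ _
    _ = a u (Q k (v' k)) := hvz k _ (hv' k)
end

section
/- In the abstract multispace BDDC setting, the smallest eigenvalue of the preconditioned operator BA satisfies λ_min(BA) ≥ 1; equivalently, a(BAu, u) ≥ a(u, u) for all u ∈ U. -/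
/-!
Decompose `u = ∑ wₖ` with `wₖ ∈ Vₖ` and let `vₖ` be the local solutions defining `BAu`.
Testing the local problems with `wₖ` and with `vₖ`, and using `u = ∑ Qₖ wₖ`, gives
`a(u, u) = ∑ a(vₖ, wₖ)` and `a(BAu, u) = ∑ a(vₖ, vₖ)`, while orthogonality of the `Vₖ` gives
`a(u, u) = ∑ a(wₖ, wₖ)`. Summing `0 ≤ a(vₖ - wₖ, vₖ - wₖ)` then yields
`2 a(u, u) ≤ a(BAu, u) + a(u, u)`.
-/

namespace Submodule

variable {R M ι : Type*} [Semiring R] [AddCommMonoid M] [Module R M]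

theorem finsetSum_eq_iSup (s : Finset ι) (p : ι → Submodule R M) :
    ∑ i ∈ s, p i = ⨆ i ∈ s, p i := by
  classical
  induction s using Finset.induction_on with
  | empty => simp
  | insert _ _ h ih => rw [Finset.sum_insert h, ih, add_eq_sup, Finset.iSup_insert]

theorem exists_finsetSum_eq_of_mem_finsetSum {s : Finset ι} {p : ι → Submodule R M} {x : M}
    (hx : x ∈ ∑ i ∈ s, p i) : ∃ w : ι → M, (∀ i, w i ∈ p i) ∧ ∑ i ∈ s, w i = x := by
  rw [finsetSum_eq_iSup, mem_iSup_finset_iff_exists_sum] at hx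
  obtain ⟨μ, hμ⟩ := hx
  exact ⟨fun i => μ i, fun i => (μ i).2, hμ⟩

end Submodule

namespace LinearMap

theorem IsOrthoᵢ.apply_sum_self {R M N ι : Type*} [CommSemiring R] [AddCommMonoid M]
    [Module R M] [AddCommMonoid N] [Module R N] {B : M →ₗ[R] M →ₗ[R] N} {v : ι → M}
    (hB : B.IsOrthoᵢ v) (s : Finset ι) :
    B (∑ i ∈ s, v i) (∑ i ∈ s, v i) = ∑ i ∈ s, B (v i) (v i) := by
  simp only [map_sum, LinearMap.sum_apply]
  refine Finset.sum_congr rfl fun i hi => ?_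
  exact Finset.sum_eq_single_of_mem i hi fun j _ hji => hB hji

theorem two_mul_apply_le_of_nonneg_apply_sub_self {R M : Type*} [CommRing R] [LinearOrder R]
    [IsStrictOrderedRing R] [AddCommGroup M] [Module R M] {B : M →ₗ[R] M →ₗ[R] R} {x y : M}
    (hxy : 0 ≤ B (x - y) (x - y)) (hB : B y x = B x y) : 2 * B x y ≤ B x x + B y y := by
  simp only [map_sub, sub_apply, hB] at hxy
  linarith

end LinearMap

theorem stmt5_general {W : Type*} [AddCommGroup W] [Module ℝ W]
    (a : W →ₗ[ℝ] W →ₗ[ℝ] ℝ) (hsymm : ∀ x y, a x y = a y x)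
    {N : ℕ} (V : Fin N → Submodule ℝ W)
    (horth : ∀ k l, k ≠ l → ∀ v ∈ V k, ∀ w ∈ V l, a v w = 0)
    (hpos : ∀ k, ∀ v ∈ V k, v ≠ 0 → 0 < a v v)
    (U : Submodule ℝ W) (hU : U ≤ ∑ k, V k)
    (Q : Fin N → W →ₗ[ℝ] W)
    (hQdec : ∀ u ∈ U, ∀ v : Fin N → W, (∀ k, v k ∈ V k) → u = ∑ k, v k →
      u = ∑ k, Q k (v k))
    (BA : W →ₗ[ℝ] W)
    (hBA : ∀ u ∈ U, ∃ v : Fin N → W, (∀ k, v k ∈ V k) ∧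
      (∀ k, ∀ z ∈ V k, a (v k) z = a u (Q k z)) ∧ BA u = ∑ k, Q k (v k)) :
    ∀ u ∈ U, a u u ≤ a (BA u) u := by
  intro u hu
  obtain ⟨w, hwV, hw⟩ := Submodule.exists_finsetSum_eq_of_mem_finsetSum (hU hu)
  obtain ⟨v, hvV, hvQ, hBAu⟩ := hBA u hu
  have hu_Q (z : Fin N → W) (hz : ∀ k, z k ∈ V k) :
      a u (∑ k, Q k (z k)) = ∑ k, a (v k) (z k) := by
    rw [map_sum]
    exact Finset.sum_congr rfl fun k _ => (hvQ k _ (hz k)).symm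
  have h_cross : a u u = ∑ k, a (v k) (w k) := by
    rw [← hu_Q w hwV, ← hQdec u hu w hwV hw.symm]
  have h_BA : a (BA u) u = ∑ k, a (v k) (v k) := by
    rw [hsymm, hBAu, hu_Q v hvV]
  have h_self : a u u = ∑ k, a (w k) (w k) := by
    rw [← hw]
    exact LinearMap.IsOrthoᵢ.apply_sum_self (fun k l hkl => horth k l hkl _ (hwV k) _ (hwV l)) _
  have h_nonneg (k : Fin N) : 0 ≤ a (v k - w k) (v k - w k) := by
    rcases eq_or_ne (v k - w k) 0 with h | h
    · simp [h]
    · exact (hpos k _ (sub_mem (hvV k) (hwV k)) h).le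
  have h_sum := Finset.sum_le_sum fun k (_ : k ∈ Finset.univ) =>
    LinearMap.two_mul_apply_le_of_nonneg_apply_sub_self (h_nonneg k) (hsymm _ _)
  rw [← Finset.mul_sum, Finset.sum_add_distrib, ← h_cross, ← h_BA, ← h_self] at h_sum
  linarith

/-- In the abstract multispace BDDC setting, the smallest eigenvalue of `BA`
is at least `1`; equivalently `a(BAu, u) ≥ a(u,u)` for all `u ∈ U`. -/
theorem stmt5 {W : Type*} [AddCommGroup W] [Module ℝ W] [FiniteDimensional ℝ W]
    (a : W →ₗ[ℝ] W →ₗ[ℝ] ℝ) (hsymm : ∀ x y, a x y = a y x)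
    {N : ℕ} (V : Fin N → Submodule ℝ W)
    (horth : ∀ k l, k ≠ l → ∀ v ∈ V k, ∀ w ∈ V l, a v w = 0)
    (hpos : ∀ k, ∀ v ∈ V k, v ≠ 0 → 0 < a v v)
    (U : Submodule ℝ W) (hU : U ≤ ∑ k, V k)
    (hposU : ∀ u ∈ U, u ≠ 0 → 0 < a u u)
    (Q : Fin N → W →ₗ[ℝ] W)
    (hQU : ∀ k, ∀ v ∈ V k, Q k v ∈ U)
    (hQdec : ∀ u ∈ U, ∀ v : Fin N → W, (∀ k, v k ∈ V k) → u = ∑ k, v k →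
      u = ∑ k, Q k (v k))
    (BA : W →ₗ[ℝ] W)
    (hBA : ∀ u ∈ U, ∃ v : Fin N → W, (∀ k, v k ∈ V k) ∧
      (∀ k, ∀ z ∈ V k, a (v k) z = a u (Q k z)) ∧ BA u = ∑ k, Q k (v k)) :
    ∀ u ∈ U, a u u ≤ a (BA u) u :=
  stmt5_general a hsymm V horth hpos U hU Q hQdec BA hBA
end

section
/- Under the partition-of-unity/projection assumptions of the BDDC framework with N = 2 spaces, V₁ = U_I, V₂ = W̃_Γ (an a-orthogonal complement structure), Q₁ = I, Q₂ = (I-P)E, the condition number of the BDDC preconditioned operator satisfies κ ≤ max{ sup_{w ∈ W̃, w≠0} ‖(I-P)Ew‖_a² / ‖w‖_a² , 1 }. -/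
/-!
Write `P` for the orthogonal projection onto `U_I` and `Q = I - P`. For an eigenpair `BA u = l u`
with `u ∈ U`, let `r = Q u` and let `v₂` be the element defining `BA u`. Testing the defining
relation of `v₂` against `r` and against `v₂` itself gives `⟪v₂, r⟫ = ‖r‖²` and
`‖v₂‖² = ⟪r, QEv₂⟫`, while `l ‖u‖² = ⟪u, BA u⟫ = ‖Pu‖² + ‖v₂‖²` and `‖u‖² = ‖Pu‖² + ‖r‖²`.
Cauchy–Schwarz turns the first relation into `‖r‖² ≤ ‖v₂‖²`, and the second, together with
`‖QEv₂‖² ≤ μ ‖v₂‖²`, into `‖v₂‖² ≤ μ ‖r‖²`; both eigenvalue bounds follow.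
-/

open RealInnerProductSpace

theorem Submodule.inner_starProjection_left_of_mem {𝕜 F : Type*} [RCLike 𝕜]
    [NormedAddCommGroup F] [InnerProductSpace 𝕜 F] (K : Submodule 𝕜 F)
    [K.HasOrthogonalProjection] (u : F) {w : F} (hw : w ∈ K) :
    inner 𝕜 (K.starProjection u) w = inner 𝕜 u w := by
  rw [inner_starProjection_left_eq_right, K.starProjection_eq_self_iff.mpr hw]

section RealInner

variable {F : Type*} [NormedAddCommGroup F] [InnerProductSpace ℝ F]

theorem norm_le_of_real_inner_eq_norm_sq {x y : F} (h : ⟪x, y⟫ = ‖y‖ ^ 2) : ‖y‖ ≤ ‖x‖ := by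
  rcases (norm_nonneg y).eq_or_lt with hy | hy
  · exact hy ▸ norm_nonneg x
  · refine le_of_mul_le_mul_right ?_ hy
    rw [← sq, ← h]
    exact real_inner_le_norm x y

theorem norm_sq_le_mul_of_norm_sq_eq_real_inner {x y z : F} {μ : ℝ} (hμ : 0 ≤ μ)
    (h : ‖x‖ ^ 2 = ⟪y, z⟫) (hz : ‖z‖ ^ 2 ≤ μ * ‖x‖ ^ 2) : ‖x‖ ^ 2 ≤ μ * ‖y‖ ^ 2 := by
  rcases (sq_nonneg ‖x‖).eq_or_lt with hx | hx
  · rw [← hx]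
    positivity
  · refine le_of_mul_le_mul_right ?_ hx
    calc ‖x‖ ^ 2 * ‖x‖ ^ 2 = ⟪y, z⟫ ^ 2 := by rw [← h]; ring
      _ ≤ ‖y‖ ^ 2 * ‖z‖ ^ 2 := by
        rw [← mul_pow]
        exact pow_le_pow_left₀ (h ▸ hx.le) (real_inner_le_norm y z) 2
      _ ≤ ‖y‖ ^ 2 * (μ * ‖x‖ ^ 2) := by gcongr
      _ = μ * ‖y‖ ^ 2 * ‖x‖ ^ 2 := by ring

end RealInner

theorem one_le_and_le_max_of_mul_eq_add {l μ s p a b : ℝ} (hs : 0 < s) (hsplit : s = p + a)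
    (hl : l * s = p + b) (hp : 0 ≤ p) (ha : 0 ≤ a) (hab : a ≤ b) (hba : b ≤ μ * a) :
    1 ≤ l ∧ l ≤ max μ 1 := by
  refine ⟨le_of_mul_le_mul_right (by linarith) hs, le_of_mul_le_mul_right ?_ hs⟩
  calc l * s = p + b := hl
    _ ≤ max μ 1 * p + max μ 1 * a :=
      add_le_add (le_mul_of_one_le_left hp (le_max_right μ 1))
        (hba.trans (mul_le_mul_of_nonneg_right (le_max_left μ 1) ha))
    _ = max μ 1 * s := by rw [hsplit, mul_add]

theorem stmt9_general {W : Type*} [NormedAddCommGroup W] [InnerProductSpace ℝ W]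
    [FiniteDimensional ℝ W]
    (UI U Wt : Submodule ℝ W) (hUIU : UI ≤ U) (hUWt : U ≤ Wt)
    (E : W →ₗ[ℝ] W) (hEid : ∀ u ∈ U, E u = u)
    (BA : W →ₗ[ℝ] W)
    (hBA : ∀ u ∈ U, ∃ v₂ ∈ Wt, (∀ z ∈ UI, ⟪v₂, z⟫ = 0) ∧
      (∀ z ∈ Wt, (∀ y ∈ UI, ⟪z, y⟫ = 0) →
        ⟪v₂, z⟫ = ⟪u, E z - (Submodule.orthogonalProjection UI (E z) : W)⟫) ∧
      BA u = (Submodule.orthogonalProjection UI u : W) +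
        (E v₂ - (Submodule.orthogonalProjection UI (E v₂) : W)))
    (μ : ℝ)
    (hμ : ∀ w ∈ Wt, ‖E w - (Submodule.orthogonalProjection UI (E w) : W)‖ ^ 2 ≤ μ * ‖w‖ ^ 2) :
    ∀ l : ℝ, (∃ u ∈ U, u ≠ 0 ∧ BA u = l • u) → 1 ≤ l ∧ l ≤ max μ 1 := by
  simp only [Submodule.coe_orthogonalProjectionOnto_apply,
    ← Submodule.starProjection_orthogonal_val, ← Submodule.mem_orthogonal'] at hBA hμ
  rintro l ⟨u, hu, hu0, hl⟩
  obtain ⟨v₂, hv₂Wt, hv₂perp, hdual, hBAu⟩ := hBA u hu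
  set r := UIᗮ.starProjection u
  have hr : r ∈ UIᗮ := UIᗮ.starProjection_apply_mem u
  have hrU : r ∈ U := by
    rw [show r = u - UI.starProjection u from UI.starProjection_orthogonal_val u]
    exact U.sub_mem hu (hUIU (UI.starProjection_apply_mem u))
  have hv₂r : ⟪v₂, r⟫ = ‖r‖ ^ 2 := by
    rw [hdual r (hUWt hrU) hr, hEid r hrU, UIᗮ.starProjection_eq_self_iff.mpr hr,
      ← UIᗮ.inner_starProjection_left_of_mem u hr, real_inner_self_eq_norm_sq]
  have hv₂v₂ : ‖v₂‖ ^ 2 = ⟪r, UIᗮ.starProjection (E v₂)⟫ := by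
    rw [← real_inner_self_eq_norm_sq, hdual v₂ hv₂Wt hv₂perp,
      UIᗮ.inner_starProjection_left_of_mem u (UIᗮ.starProjection_apply_mem _)]
  have hrayleigh : l * ‖u‖ ^ 2 = ‖UI.starProjection u‖ ^ 2 + ‖v₂‖ ^ 2 := by
    have h := congrArg (⟪u, ·⟫) (hl.symm.trans hBAu)
    rwa [inner_smul_right, real_inner_self_eq_norm_sq, inner_add_right,
      ← UI.inner_starProjection_left_of_mem u (UI.starProjection_apply_mem u),
      real_inner_self_eq_norm_sq, ← hdual v₂ hv₂Wt hv₂perp, real_inner_self_eq_norm_sq] at h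
  have hu2 : 0 < ‖u‖ ^ 2 := by positivity
  have hμ0 : 0 ≤ μ := nonneg_of_mul_nonneg_left ((sq_nonneg _).trans (hμ u (hUWt hu))) hu2
  have hlower : ‖r‖ ^ 2 ≤ ‖v₂‖ ^ 2 := by
    gcongr
    exact norm_le_of_real_inner_eq_norm_sq hv₂r
  have hupper := norm_sq_le_mul_of_norm_sq_eq_real_inner hμ0 hv₂v₂ (hμ v₂ hv₂Wt)
  exact one_le_and_le_max_of_mul_eq_add hu2 (UI.norm_sq_eq_add_norm_sq_starProjection u)
    hrayleigh (sq_nonneg _) (sq_nonneg _) hlower hupper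

/-- Two-space multispace BDDC bound with `V₁ = U_I`, `V₂` the `a`-orthogonal
complement of `U_I` in `W̃`, `Q₁ = I`, `Q₂ = (I-P)E`: every eigenvalue `l` of
the preconditioned operator `BA` satisfies `1 ≤ l ≤ max{μ, 1}` whenever
`μ` bounds the Rayleigh quotient `‖(I-P)Ew‖²/‖w‖²` on `W̃`; hence
`κ ≤ max{sup_w ‖(I-P)Ew‖²/‖w‖², 1}`. -/
theorem stmt9 {W : Type*} [NormedAddCommGroup W] [InnerProductSpace ℝ W]
    [FiniteDimensional ℝ W]
    (UI U Wt : Submodule ℝ W) (hUIU : UI ≤ U) (hUWt : U ≤ Wt)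
    (E : W →ₗ[ℝ] W) (hE : ∀ w ∈ Wt, E w ∈ U) (hEid : ∀ u ∈ U, E u = u)
    (BA : W →ₗ[ℝ] W)
    (hBA : ∀ u ∈ U, ∃ v₂ ∈ Wt, (∀ z ∈ UI, ⟪v₂, z⟫ = 0) ∧
      (∀ z ∈ Wt, (∀ y ∈ UI, ⟪z, y⟫ = 0) →
        ⟪v₂, z⟫ = ⟪u, E z - (Submodule.orthogonalProjection UI (E z) : W)⟫) ∧
      BA u = (Submodule.orthogonalProjection UI u : W) +
        (E v₂ - (Submodule.orthogonalProjection UI (E v₂) : W)))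
    (μ : ℝ)
    (hμ : ∀ w ∈ Wt, ‖E w - (Submodule.orthogonalProjection UI (E w) : W)‖ ^ 2 ≤ μ * ‖w‖ ^ 2) :
    ∀ l : ℝ, (∃ u ∈ U, u ≠ 0 ∧ BA u = l • u) → 1 ≤ l ∧ l ≤ max μ 1 :=
  stmt9_general UI U Wt hUIU hUWt E hEid BA hBA μ hμ
end

section
/- Key inequality in the proof of Theorem 1: if W̃ ⊆ W, w ∈ W̃ is continuous on each coarse subdomain (so that ‖w‖_{a^Θ} = ‖w‖_{a^Θ̂}), Ew = Êw on W̃, and (I-P)Ew and (Î-P̂)Êw agree on the coarse interface Γ while (I-P)Ew is discrete harmonic with respect to the coarse partition, then ‖(I-P)Ew‖_{a^Θ} ≤ ‖(Î-P̂)Êw‖_{a^Θ̂}. Consequently sup_{w∈W̃} ‖(I-P)Ew‖_{a^Θ}/‖w‖_{a^Θ} ≤ sup_{w∈W̃} ‖(Î-P̂)Êw‖_{a^Θ̂}/‖w‖_{a^Θ̂}. -/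
/-- Key inequality in Theorem 1: with `F = (I-P)E` and `G = (Î-P̂)Ê`, if for
`w ∈ W̃` the element `F w` has minimal `a^Θ`-energy among elements differing
from it by an element of `U_I`, `G w - F w ∈ U_I`, and `G w` is subdomain-wise
continuous (so the two broken forms agree on it), then
`‖F w‖_{a^Θ} ≤ ‖G w‖_{a^Θ̂}`; consequently the Rayleigh-quotient bound for the
fine problem transfers to the coarse one. -/
theorem stmt10 {W : Type*} [AddCommGroup W] [Module ℝ W]
    (aT aTh : W →ₗ[ℝ] W →ₗ[ℝ] ℝ)
    (hsT : ∀ x y, aT x y = aT y x) (hsTh : ∀ x y, aTh x y = aTh y x)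
    (hpsdT : ∀ x, 0 ≤ aT x x) (hpsdTh : ∀ x, 0 ≤ aTh x x)
    (C : Submodule ℝ W) (hagree : ∀ c ∈ C, aT c c = aTh c c)
    (Wt : Submodule ℝ W) (hWtC : Wt ≤ C)
    (UI : Submodule ℝ W)
    (F G : W →ₗ[ℝ] W)
    (hmin : ∀ w ∈ Wt, ∀ z : W, z - F w ∈ UI → aT (F w) (F w) ≤ aT z z)
    (hdiff : ∀ w ∈ Wt, G w - F w ∈ UI)
    (hGC : ∀ w ∈ Wt, G w ∈ C) :
    (∀ w ∈ Wt, aT (F w) (F w) ≤ aTh (G w) (G w)) ∧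
    (∀ μ : ℝ, (∀ w ∈ Wt, aTh (G w) (G w) ≤ μ * aTh w w) →
      ∀ w ∈ Wt, aT (F w) (F w) ≤ μ * aT w w) := by
  have key : ∀ w ∈ Wt, aT (F w) (F w) ≤ aTh (G w) (G w) := fun w hw => by
    calc aT (F w) (F w) ≤ aT (G w) (G w) := hmin w hw (G w) (hdiff w hw)
      _ = aTh (G w) (G w) := hagree _ (hGC w hw)
  refine ⟨key, fun μ hμ w hw => ?_⟩
  calc aT (F w) (F w) ≤ aTh (G w) (G w) := key w hw
    _ ≤ μ * aTh w w := hμ w hw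
    _ = μ * aT w w := by rw [hagree w (hWtC hw)]
end
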